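/- With the weighted-graph and unit potential flow setup below, define the catalyst w = (1/(R_s √d_s)) Σ_{x ∈ V, x ≠ s} v_x √(d_x) |φ_x⟩ in the edge space. Then (I − Π₊)(|φ_s⟩ + w) = (1/√(2 R_s d_s)) |f⟩. -/

import Mathlib

open scoped InnerProductSpace BigOperators

namespace Elfs

variable {V : Type*} [Fintype V] [DecidableEq V]

/-- The degree of a vertex: `d_x = Σ_y w_{xy}`. -/
noncomputable def deg (w : V → V → ℝ) (x : V) : ℝ := ∑ y, w x y

/-- The basis state `|xy⟩` of the edge space. -/
noncomputable def ket (p : V × V) : EuclideanSpace ℂ (V × V) :=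
  EuclideanSpace.single p 1

/-- The star state `|φ_x⟩ = (1/√d_x) Σ_y √(w_{xy}) |xy⟩`. -/
noncomputable def starState (w : V → V → ℝ) (x : V) : EuclideanSpace ℂ (V × V) :=
  ((Real.sqrt (deg w x) : ℂ))⁻¹ • ∑ y, ((Real.sqrt (w x y) : ℝ) : ℂ) • ket (x, y)

/-- The electric flow state `|f⟩ = (1/√(2 R_s)) Σ_{(x,y)} (f_{xy}/√(w_{xy})) |xy⟩`
for the potential flow `f_{xy} = w_{xy}(v_x − v_y)` (terms with `w_{xy} = 0` contribute `0`,
matching the restriction of the sum to edges of positive weight). -/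
noncomputable def flowState (w : V → V → ℝ) (v : V → ℝ) (s : V) :
    EuclideanSpace ℂ (V × V) :=
  ((Real.sqrt (2 * v s) : ℂ))⁻¹ •
    ∑ p : V × V, ((w p.1 p.2 * (v p.1 - v p.2) / Real.sqrt (w p.1 p.2) : ℝ) : ℂ) • ket p

/-- The symmetric subspace `span{|xy⟩ + |yx⟩ : (x,y) ∈ E}`. -/
noncomputable def symSpan (E : Set (V × V)) : Submodule ℂ (EuclideanSpace ℂ (V × V)) :=
  Submodule.span ℂ {u | ∃ p ∈ E, u = ket p + ket p.swap}

/-- `Π₊`, the orthogonal projection onto the symmetric subspace. -/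
noncomputable def projSym (E : Set (V × V)) :
    EuclideanSpace ℂ (V × V) →ₗ[ℂ] EuclideanSpace ℂ (V × V) :=
  (symSpan E).subtype ∘ₗ ((symSpan E).orthogonalProjectionOnto).toLinearMap

end Elfs

namespace Elfs

/-- The catalyst `w = (1/(R_s √d_s)) Σ_{x ≠ s} v_x √(d_x) |φ_x⟩`. -/
noncomputable def catalyst {V : Type*} [Fintype V] [DecidableEq V]
    (w : V → V → ℝ) (v : V → ℝ) (s : V) : EuclideanSpace ℂ (V × V) :=
  (((v s * Real.sqrt (deg w s) : ℝ) : ℂ))⁻¹ •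
    ∑ x ∈ Finset.univ \ {s}, (((v x * Real.sqrt (deg w x) : ℝ)) : ℂ) • starState w x

end Elfs

/-!
The vector `|φ_s⟩ + w` has coordinate `v_x √w_{xy} / (R_s √d_s)` at `|xy⟩`: the catalyst supplies,
for every `x ≠ s`, the coefficient that the star state has at `x = s`. Since this vector is
supported on `E`, its symmetric part lies in the range of `Π₊` and its antisymmetric part in the
kernel, so `I − Π₊` keeps exactly the antisymmetric part. By the symmetry of `w`, its coordinates
`(v_x − v_y) √w_{xy} / (2 R_s √d_s)` are those of `|f⟩` scaled by `1/√(2 R_s d_s)`.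
-/

namespace Elfs

variable {V : Type*} [Fintype V] [DecidableEq V]

lemma sum_smul_ket_apply (g : V × V → ℂ) (q : V × V) :
    (∑ p : V × V, g p • ket p) q = g q := by
  simp [ket, Pi.single_apply]

lemma projSym_apply (E : Set (V × V)) (x : EuclideanSpace ℂ (V × V)) :
    projSym E x = (symSpan E).starProjection x :=
  rfl

lemma mem_symSpan_of_support_subset {E : Set (V × V)} {c : V × V → ℂ}
    (hc : ∀ p ∉ E, c p = 0) : ∑ p : V × V, c p • (ket p + ket p.swap) ∈ symSpan E := by
  refine Submodule.sum_mem _ fun p _ => ?_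
  by_cases hp : p ∈ E
  · exact Submodule.smul_mem _ _ (Submodule.subset_span ⟨p, hp, rfl⟩)
  · simp [hc p hp]

lemma mem_symSpan_orthogonal {E : Set (V × V)} {y : EuclideanSpace ℂ (V × V)}
    (hy : ∀ p, y p.swap = -y p) : y ∈ (symSpan E)ᗮ := by
  rw [symSpan, Submodule.mem_orthogonal]
  intro u hu
  induction hu using Submodule.span_induction with
  | mem u hu =>
    obtain ⟨p, -, rfl⟩ := hu
    simp [inner_add_left, ket, EuclideanSpace.inner_single_left, hy]
  | zero => exact inner_zero_left _
  | add x y _ _ hx hy => rw [inner_add_left, hx, hy, add_zero]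
  | smul a x _ hx => rw [inner_smul_left, hx, mul_zero]

/-- The symmetric part of `x` lies in `symSpan E` because `x` vanishes off `E`; the antisymmetric
part is orthogonal to every `|xy⟩ + |yx⟩`. -/
lemma sub_projSym_eq_antisymm (E : Set (V × V)) (x : EuclideanSpace ℂ (V × V))
    (hx : ∀ p ∉ E, x p = 0) :
    x - projSym E x = ∑ p : V × V, ((x p - x p.swap) / 2) • ket p := by
  have hsym := mem_symSpan_of_support_subset (E := E) (c := fun p => x p / 2) fun p hp => by
    simp [hx p hp]
  have hanti : (∑ p : V × V, ((x p - x p.swap) / 2) • ket p) ∈ (symSpan E)ᗮ :=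
    mem_symSpan_orthogonal fun p => by simp only [sum_smul_ket_apply, Prod.swap_swap]; ring
  have hdecomp : x = ∑ p : V × V, (x p / 2) • (ket p + ket p.swap) +
      ∑ p : V × V, ((x p - x p.swap) / 2) • ket p := by
    ext q
    simp only [ket, smul_add, Finset.sum_add_distrib, PiLp.add_apply, WithLp.ofLp_sum,
      WithLp.ofLp_smul, PiLp.ofLp_single, Finset.sum_apply, Pi.smul_apply, Pi.single_apply,
      eq_comm (a := q), smul_eq_mul, mul_ite, mul_one, mul_zero, Finset.sum_ite_eq',
      Finset.mem_univ, ↓reduceIte, Prod.swap_eq_iff_eq_swap]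
    ring
  rw [projSym_apply, Submodule.eq_starProjection_of_mem_orthogonal' hsym hanti hdecomp,
    sub_eq_iff_eq_add', ← hdecomp]

lemma starState_apply (w : V → V → ℝ) (x : V) (q : V × V) :
    starState w x q = if q.1 = x then ((√(w x q.2) / √(deg w x) : ℝ) : ℂ) else 0 := by
  obtain ⟨a, b⟩ := q
  by_cases h : a = x
  · subst h
    simp [starState, ket, Pi.single_apply, div_eq_inv_mul]
  · simp [starState, ket, h]

lemma starState_add_catalyst_apply {w : V → V → ℝ} {v : V → ℝ} {s : V}
    (hdeg : ∀ x, 0 < deg w x) (hv : v s ≠ 0) (q : V × V) :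
    (starState w s + catalyst w v s) q =
      ((v q.1 * √(w q.1 q.2) / (v s * √(deg w s)) : ℝ) : ℂ) := by
  have hv' : (v s : ℂ) ≠ 0 := by exact_mod_cast hv
  have hds : (√(deg w s) : ℂ) ≠ 0 := by exact_mod_cast (Real.sqrt_pos.mpr (hdeg s)).ne'
  have hdq : (√(deg w q.1) : ℂ) ≠ 0 := by exact_mod_cast (Real.sqrt_pos.mpr (hdeg q.1)).ne'
  simp only [catalyst, PiLp.add_apply, PiLp.smul_apply, WithLp.ofLp_sum, Finset.sum_apply,
    starState_apply, smul_eq_mul, mul_ite, mul_zero, Finset.sum_ite_eq, Finset.mem_sdiff,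
    Finset.mem_univ, Finset.mem_singleton, true_and]
  by_cases h : q.1 = s
  · simp [h, mul_div_mul_left _ _ hv']
  · simp only [h, ↓reduceIte, not_false_eq_true, Complex.ofReal_mul, Complex.ofReal_div,
      zero_add]
    field_simp

lemma flowState_apply (w : V → V → ℝ) (v : V → ℝ) (s : V) (q : V × V) :
    flowState w v s q =
      (((√(2 * v s))⁻¹ * (w q.1 q.2 * (v q.1 - v q.2) / √(w q.1 q.2)) : ℝ) : ℂ) := by
  simp [flowState, sum_smul_ket_apply]

lemma antisymm_coeff_eq_flow_coeff {a d : ℝ} (ha : 0 < a) (hd : 0 < d) (ω p q : ℝ) :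
    (p * √ω / (a * √d) - q * √ω / (a * √d)) / 2 =
      (√(2 * a * d))⁻¹ * ((√(2 * a))⁻¹ * (ω * (p - q) / √ω)) := by
  have hsqrt : √(2 * a * d) * √(2 * a) = 2 * a * √d := by
    rw [Real.sqrt_mul (by positivity), mul_right_comm, Real.mul_self_sqrt (by positivity)]
  have hd' : √d ≠ 0 := (Real.sqrt_pos.mpr hd).ne'
  rw [← mul_assoc, ← mul_inv, hsqrt, mul_div_right_comm ω, Real.div_sqrt]
  field_simp

end Elfs

open Elfs

theorem stmt7_general {V : Type*} [Fintype V] [DecidableEq V]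
    (E : Set (V × V)) (w : V → V → ℝ) (s : V)
    (hwsymm : ∀ x y, w x y = w y x)
    (hwE : ∀ x y, (x, y) ∉ E → w x y = 0)
    (hdeg : ∀ x, 0 < deg w x)
    (v : V → ℝ) (hRpos : 0 < v s) :
    starState w s + catalyst w v s - projSym E (starState w s + catalyst w v s) =
      (((Real.sqrt (2 * v s * deg w s))⁻¹ : ℝ) : ℂ) • flowState w v s := by
  have hψ := starState_add_catalyst_apply hdeg hRpos.ne'
  rw [sub_projSym_eq_antisymm E _ fun q hq => by simp [hψ, hwE q.1 q.2 hq]]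
  ext q
  simp only [sum_smul_ket_apply, hψ, flowState_apply, PiLp.smul_apply, Prod.fst_swap,
    Prod.snd_swap, hwsymm q.2 q.1, smul_eq_mul]
  exact_mod_cast antisymm_coeff_eq_flow_coeff hRpos (hdeg s) _ _ _

/-- `(I − Π₊)(|φ_s⟩ + w) = (1/√(2 R_s d_s)) |f⟩`. -/
theorem stmt7 {V : Type*} [Fintype V] [DecidableEq V]
    (E : Set (V × V)) (w : V → V → ℝ) (s : V) (M : Finset V)
    (hE : ∀ p : V × V, p ∈ E ↔ p.swap ∈ E)
    (hw0 : ∀ x y, 0 ≤ w x y) (hwsymm : ∀ x y, w x y = w y x)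
    (hwE : ∀ x y, (x, y) ∉ E → w x y = 0)
    (hdeg : ∀ x, 0 < deg w x)
    (hM : M.Nonempty) (hsM : s ∉ M)
    (v : V → ℝ) (hvM : ∀ y ∈ M, v y = 0) (hRpos : 0 < v s)
    (hunit : ∑ y, w s y * (v s - v y) = 1)
    (hcons : ∀ x, x ≠ s → x ∉ M → ∑ y, w x y * (v x - v y) = 0) :
    starState w s + catalyst w v s - projSym E (starState w s + catalyst w v s) =
      (((Real.sqrt (2 * v s * deg w s))⁻¹ : ℝ) : ℂ) • flowState w v s :=
  stmt7_general E w s hwsymm hwE hdeg v hRpos
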